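/- arXiv:2505.06981 — 6 statements merged into one kernel-verified Lean document; each statement's English description precedes it below -/
import Mathlib

section
/- Assume the CSS code, the code-surgery datum, and that the pair (H_G, H_M) is (d_R, S)-bounded for a positive integer d_R. Then for every ψ ∈ F₂^{k−q}, the spacetime error-wise distance satisfies d(H^{st}_X, J^{st}_X, ψ) ≥ min{ d(H_X, α_⊥ J_X, ψ), d_R }, where the minimum is taken in ℕ∞. -/
open Matrix

/-- Error-wise distance `d(H, J, ψ) ∈ ℕ∞`: the infimum of the Hamming weight `|e|` over all
row vectors `e` with `H eᵀ = 0` and `J eᵀ = ψᵀ`; `⊤` if no such `e` exists. -/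
noncomputable def ewDist {χ κ μ : Type*} [Fintype κ]
    (H : Matrix χ κ (ZMod 2)) (J : Matrix μ κ (ZMod 2)) (ψ : μ → ZMod 2) : ℕ∞ :=
  sInf {w : ℕ∞ | ∃ e : κ → ZMod 2, H.mulVec e = 0 ∧ J.mulVec e = ψ ∧ w = (hammingNorm e : ℕ∞)}

/-- The pair `(H_G, H_M)` is `(d_R, S)`-bounded. -/
def BoundedPair {n rG rM nG : ℕ} (HG : Matrix (Fin rG) (Fin nG) (ZMod 2))
    (HM : Matrix (Fin rM) (Fin rG) (ZMod 2)) (S : Matrix (Fin nG) (Fin n) (ZMod 2))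
    (dR : ℕ) : Prop :=
  ∀ v : Fin rG → ZMod 2, HM.mulVec v = 0 → hammingNorm v < dR →
    ∃ u : Fin nG → ZMod 2, v = HG.mulVec u ∧
      hammingNorm (Matrix.vecMul u S) ≤ hammingNorm v

/-- Deformed-code X check matrix `H̄_X = [[H_X, T],[0, H_M]]`. -/
def HbarX {n rX rG rM : ℕ} (HX : Matrix (Fin rX) (Fin n) (ZMod 2))
    (T : Matrix (Fin rX) (Fin rG) (ZMod 2)) (HM : Matrix (Fin rM) (Fin rG) (ZMod 2)) :
    Matrix (Fin rX ⊕ Fin rM) (Fin n ⊕ Fin rG) (ZMod 2) :=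
  Matrix.fromBlocks HX T 0 HM

/-- Deformed-code Z check matrix `H̄_Z = [[H_Z, 0],[S, H_Gᵀ]]`. -/
def HbarZ {n rZ rG nG : ℕ} (HZ : Matrix (Fin rZ) (Fin n) (ZMod 2))
    (S : Matrix (Fin nG) (Fin n) (ZMod 2)) (HG : Matrix (Fin rG) (Fin nG) (ZMod 2)) :
    Matrix (Fin rZ ⊕ Fin nG) (Fin n ⊕ Fin rG) (ZMod 2) :=
  Matrix.fromBlocks HZ 0 S HGᵀ

/-- Deformed-code X generator matrix `J̄_X = (α_⊥ J_X  β)`. -/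
def JbarX {n k q rG : ℕ} (JX : Matrix (Fin k) (Fin n) (ZMod 2))
    (αperp : Matrix (Fin (k - q)) (Fin k) (ZMod 2))
    (β : Matrix (Fin (k - q)) (Fin rG) (ZMod 2)) :
    Matrix (Fin (k - q)) (Fin n ⊕ Fin rG) (ZMod 2) :=
  Matrix.fromCols (αperp * JX) β

/-- Deformed-code Z generator matrix `J̄_Z = ((α_⊥ʳ)ᵀ J_Z  0)`. -/
def JbarZ {n k q rG : ℕ} (JZ : Matrix (Fin k) (Fin n) (ZMod 2))
    (αperpR : Matrix (Fin k) (Fin (k - q)) (ZMod 2)) :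
    Matrix (Fin (k - q)) (Fin n ⊕ Fin rG) (ZMod 2) :=
  Matrix.fromCols (αperpRᵀ * JZ) (0 : Matrix (Fin (k - q)) (Fin rG) (ZMod 2))

/-- Repetition-code check matrix `H_m ∈ F₂^{(m−1)×m}`, `(H_m)_{i,j} = 1` iff `j ∈ {i, i+1}`
(1-based); in 0-based indexing: `j = i` or `j = i+1`. -/
def repH (m : ℕ) : Matrix (Fin (m - 1)) (Fin m) (ZMod 2) :=
  Matrix.of fun i j => if (j : ℕ) = (i : ℕ) ∨ (j : ℕ) = (i : ℕ) + 1 then 1 else 0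

/-- The matrix `(E_p  0) ∈ F₂^{p×m}` selecting the first `p` coordinates. -/
def projFirst (p m : ℕ) : Matrix (Fin p) (Fin m) (ZMod 2) :=
  Matrix.of fun i j => if (j : ℕ) = (i : ℕ) then 1 else 0

/-- Hamming weight of a matrix (number of nonzero entries). -/
def matWeight {ι κ : Type*} [Fintype ι] [Fintype κ] (M : Matrix ι κ (ZMod 2)) : ℕ :=
  hammingNorm (Function.uncurry M)

/-- Spacetime X check matrix
`H^{st}_X = [[H̄_X, 0, 0, E_{d_T;1}⊗E], [0, E_{d_T−1}⊗H̄_X, 0, H_{d_T}⊗E], [0, 0, H̄_X, E_{d_T;d_T}⊗E]]`,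
built from the deformed check matrix `H̄_X` (here `E = E_{r_X+r_M}`).  Rounds are 0-based:
round index `s : Fin d_T`, with `s = 0` the first round and `s = d_T − 1` the last. -/
def HstX {n rX rG rM : ℕ} (dT : ℕ)
    (HbX : Matrix (Fin rX ⊕ Fin rM) (Fin n ⊕ Fin rG) (ZMod 2)) :
    Matrix ((Fin rX ⊕ Fin rM) ⊕ (Fin (dT - 1) × (Fin rX ⊕ Fin rM)) ⊕ (Fin rX ⊕ Fin rM))
      ((Fin n ⊕ Fin rG) ⊕ (Fin (dT - 1) × (Fin n ⊕ Fin rG)) ⊕ (Fin n ⊕ Fin rG) ⊕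
        (Fin dT × (Fin rX ⊕ Fin rM))) (ZMod 2) :=
  Matrix.of fun i j =>
    match i, j with
    | Sum.inl c, Sum.inl qq => HbX c qq
    | Sum.inl c, Sum.inr (Sum.inr (Sum.inr (s, c'))) =>
        if (s : ℕ) = 0 ∧ c' = c then 1 else 0
    | Sum.inr (Sum.inl (t, c)), Sum.inr (Sum.inl (t', qq)) =>
        if t' = t then HbX c qq else 0
    | Sum.inr (Sum.inl (t, c)), Sum.inr (Sum.inr (Sum.inr (s, c'))) =>
        if ((s : ℕ) = (t : ℕ) ∨ (s : ℕ) = (t : ℕ) + 1) ∧ c' = c then 1 else 0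
    | Sum.inr (Sum.inr c), Sum.inr (Sum.inr (Sum.inl qq)) => HbX c qq
    | Sum.inr (Sum.inr c), Sum.inr (Sum.inr (Sum.inr (s, c'))) =>
        if (s : ℕ) = dT - 1 ∧ c' = c then 1 else 0
    | _, _ => 0

/-- Spacetime Z check matrix
`H^{st}_Z = [[H_Z, 0, 0, E_{d_T;1}⊗γ₁], [0, E_{d_T−1}⊗H̄_Z, 0, H_{d_T}⊗E], [0, 0, H_Z, E_{d_T;d_T}⊗γ₁]]`,
built from `H_Z` and the deformed check matrix `H̄_Z` (here `E = E_{r_Z+n_G}` and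
`γ₁ = (E_{r_Z}  0)`). -/
def HstZ {n rZ rG nG : ℕ} (dT : ℕ) (HZ : Matrix (Fin rZ) (Fin n) (ZMod 2))
    (HbZ : Matrix (Fin rZ ⊕ Fin nG) (Fin n ⊕ Fin rG) (ZMod 2)) :
    Matrix (Fin rZ ⊕ (Fin (dT - 1) × (Fin rZ ⊕ Fin nG)) ⊕ Fin rZ)
      (Fin n ⊕ (Fin (dT - 1) × (Fin n ⊕ Fin rG)) ⊕ Fin n ⊕
        (Fin dT × (Fin rZ ⊕ Fin nG))) (ZMod 2) :=
  Matrix.of fun i j =>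
    match i, j with
    | Sum.inl z, Sum.inl a => HZ z a
    | Sum.inl z, Sum.inr (Sum.inr (Sum.inr (s, w))) =>
        if (s : ℕ) = 0 ∧ w = Sum.inl z then 1 else 0
    | Sum.inr (Sum.inl (t, w)), Sum.inr (Sum.inl (t', qq)) =>
        if t' = t then HbZ w qq else 0
    | Sum.inr (Sum.inl (t, w)), Sum.inr (Sum.inr (Sum.inr (s, w'))) =>
        if ((s : ℕ) = (t : ℕ) ∨ (s : ℕ) = (t : ℕ) + 1) ∧ w' = w then 1 else 0
    | Sum.inr (Sum.inr z), Sum.inr (Sum.inr (Sum.inl a)) => HZ z a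
    | Sum.inr (Sum.inr z), Sum.inr (Sum.inr (Sum.inr (s, w))) =>
        if (s : ℕ) = dT - 1 ∧ w = Sum.inl z then 1 else 0
    | _, _ => 0

/-- Spacetime X generator matrix `J^{st}_X = (J̄_X, 1_{d_T−1}⊗J̄_X, J̄_X, 0)`. -/
def JstX {n k q rX rG rM : ℕ} (dT : ℕ)
    (JbX : Matrix (Fin (k - q)) (Fin n ⊕ Fin rG) (ZMod 2)) :
    Matrix (Fin (k - q))
      ((Fin n ⊕ Fin rG) ⊕ (Fin (dT - 1) × (Fin n ⊕ Fin rG)) ⊕ (Fin n ⊕ Fin rG) ⊕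
        (Fin dT × (Fin rX ⊕ Fin rM))) (ZMod 2) :=
  Matrix.of fun i j =>
    match j with
    | Sum.inl qq => JbX i qq
    | Sum.inr (Sum.inl (_, qq)) => JbX i qq
    | Sum.inr (Sum.inr (Sum.inl qq)) => JbX i qq
    | Sum.inr (Sum.inr (Sum.inr _)) => 0

/-- Spacetime Z generator matrix `J^{st}_Z = ((α_⊥ʳ)ᵀJ_Z, 1_{d_T−1}⊗J̄_Z, (α_⊥ʳ)ᵀJ_Z, 0)`,
given `JZ' = (α_⊥ʳ)ᵀ J_Z` and `J̄_Z`. -/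
def JstZ {n k q rZ rG nG : ℕ} (dT : ℕ)
    (JZ' : Matrix (Fin (k - q)) (Fin n) (ZMod 2))
    (JbZ : Matrix (Fin (k - q)) (Fin n ⊕ Fin rG) (ZMod 2)) :
    Matrix (Fin (k - q))
      (Fin n ⊕ (Fin (dT - 1) × (Fin n ⊕ Fin rG)) ⊕ Fin n ⊕
        (Fin dT × (Fin rZ ⊕ Fin nG))) (ZMod 2) :=
  Matrix.of fun i j =>
    match j with
    | Sum.inl a => JZ' i a
    | Sum.inr (Sum.inl (_, qq)) => JbZ i qq
    | Sum.inr (Sum.inr (Sum.inl a)) => JZ' i a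
    | Sum.inr (Sum.inr (Sum.inr _)) => 0

/-- Spacetime generator matrix for measured Z logical operators
`J^{st}_{mz} = (αJ_Z, 1_{d_T−1}⊗(αJ_Z η), αJ_Z, 0)`, given `M = α J_Z`
(note `α J_Z η = (α J_Z  0)`). -/
def JstMZ {n q rZ rG nG : ℕ} (dT : ℕ) (M : Matrix (Fin q) (Fin n) (ZMod 2)) :
    Matrix (Fin q)
      (Fin n ⊕ (Fin (dT - 1) × (Fin n ⊕ Fin rG)) ⊕ Fin n ⊕
        (Fin dT × (Fin rZ ⊕ Fin nG))) (ZMod 2) :=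
  Matrix.of fun i j =>
    match j with
    | Sum.inl a => M i a
    | Sum.inr (Sum.inl (_, Sum.inl a)) => M i a
    | Sum.inr (Sum.inl (_, Sum.inr _)) => 0
    | Sum.inr (Sum.inr (Sum.inl a)) => M i a
    | Sum.inr (Sum.inr (Sum.inr _)) => 0

/-- Spacetime generator matrix for measurement outcomes
`J^{st}_{oc} = (αJ_Z, 0, 0, E_{d_T;1}⊗(αJ_Z R γ₂))`, given `M = α J_Z` and `N = α J_Z R`
(note `α J_Z R γ₂ = (0  α J_Z R)`). -/
def JstOC {n q rZ rG nG : ℕ} (dT : ℕ) (M : Matrix (Fin q) (Fin n) (ZMod 2))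
    (N : Matrix (Fin q) (Fin nG) (ZMod 2)) :
    Matrix (Fin q)
      (Fin n ⊕ (Fin (dT - 1) × (Fin n ⊕ Fin rG)) ⊕ Fin n ⊕
        (Fin dT × (Fin rZ ⊕ Fin nG))) (ZMod 2) :=
  Matrix.of fun i j =>
    match j with
    | Sum.inl a => M i a
    | Sum.inr (Sum.inl _) => 0
    | Sum.inr (Sum.inr (Sum.inl _)) => 0
    | Sum.inr (Sum.inr (Sum.inr (_, Sum.inl _))) => 0
    | Sum.inr (Sum.inr (Sum.inr (s, Sum.inr g))) => if (s : ℕ) = 0 then N i g else 0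


lemma hn_eq_sum {κ : Type*} [Fintype κ] (x : κ → ZMod 2) :
    hammingNorm x = ∑ i, if x i ≠ 0 then 1 else 0 := by
  rw [hammingNorm, Finset.card_filter]

lemma hn_add {κ : Type*} [Fintype κ] (x y : κ → ZMod 2) :
    hammingNorm (x + y) ≤ hammingNorm x + hammingNorm y := by
  have h := hammingDist_triangle (x + y) y 0
  rw [hammingDist_zero_right, hammingDist_zero_right] at h
  have h3 : hammingDist (x + y) y = hammingNorm x := by
    rw [hammingDist_comm, hammingDist_eq_hammingNorm]; congr 1; abel
  omega

lemma hn_finsum {ι κ : Type*} [Fintype κ] (s : Finset ι) (g : ι → κ → ZMod 2) :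
    hammingNorm (∑ t ∈ s, g t) ≤ ∑ t ∈ s, hammingNorm (g t) := by
  induction s using Finset.cons_induction with
  | empty => simp
  | cons a s ha ih =>
      rw [Finset.sum_cons, Finset.sum_cons]
      exact le_trans (hn_add _ _) (by gcongr)

lemma hn_sumType {ι κ : Type*} [Fintype ι] [Fintype κ] (x : ι ⊕ κ → ZMod 2) :
    hammingNorm x = hammingNorm (x ∘ Sum.inl) + hammingNorm (x ∘ Sum.inr) := by
  simp [hn_eq_sum, Fintype.sum_sum_type, Function.comp]

lemma hn_prodType {ι κ : Type*} [Fintype ι] [Fintype κ] (x : ι × κ → ZMod 2) :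
    hammingNorm x = ∑ t : ι, hammingNorm (fun a => x (t, a)) := by
  simp [hn_eq_sum, Fintype.sum_prod_type]


lemma z2_add_eq_zero {a b : ZMod 2} (h : a + b = 0) : a = b := by
  have h2 : a - b = 0 := by rw [CharTwo.sub_eq_add]; exact h
  exact sub_eq_zero.mp h2

lemma sum_ite_and_right {ι : Type*} [Fintype ι] [DecidableEq ι]
    (P : Prop) [Decidable P] (c : ι) (v : ι → ZMod 2) :
    ∑ a, (if P ∧ a = c then v a else 0) = if P then v c else 0 := by
  by_cases hP : P <;> simp [hP]

lemma sum_fin_ite_val {dT : ℕ} (j : ℕ) (w : Fin dT → ZMod 2) :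
    ∑ x : Fin dT, (if (x : ℕ) = j then w x else 0) =
      if h : j < dT then w ⟨j, h⟩ else 0 := by
  split
  · next h =>
      rw [Finset.sum_eq_single_of_mem ⟨j, h⟩ (Finset.mem_univ _)]
      · simp
      · intro x _ hx
        rw [if_neg]
        exact fun hc => hx (Fin.ext hc)
  · next h =>
      apply Finset.sum_eq_zero
      intro x _
      rw [if_neg]
      exact fun hc => h (hc ▸ x.isLt)

lemma sum_fin_ite_or {dT : ℕ} (i j : ℕ) (hij : i ≠ j) (w : Fin dT → ZMod 2) :
    ∑ x : Fin dT, (if (x : ℕ) = i ∨ (x : ℕ) = j then w x else 0) =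
      (if h : i < dT then w ⟨i, h⟩ else 0) + (if h : j < dT then w ⟨j, h⟩ else 0) := by
  rw [← sum_fin_ite_val i w, ← sum_fin_ite_val j w, ← Finset.sum_add_distrib]
  apply Finset.sum_congr rfl
  intro x _
  by_cases h1 : (x : ℕ) = i <;> by_cases h2 : (x : ℕ) = j <;> simp_all


lemma sum_ite_const {ι : Type*} [Fintype ι] (P : Prop) [Decidable P] (f : ι → ZMod 2) :
    ∑ a, (if P then f a else 0) = if P then ∑ a, f a else 0 := by
  by_cases hP : P <;> simp [hP]

lemma mulVec_finsum {ι κ μ : Type*} [Fintype κ] (s : Finset ι)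
    (B : Matrix μ κ (ZMod 2)) (g : ι → κ → ZMod 2) :
    B.mulVec (∑ t ∈ s, g t) = ∑ t ∈ s, B.mulVec (g t) := by
  induction s using Finset.cons_induction with
  | empty => simp
  | cons a s ha ih => rw [Finset.sum_cons, Finset.sum_cons, Matrix.mulVec_add, ih]

/-- spacetime error-wise distance bound for errors on unmeasured X logical
operators: `d(H^{st}_X, J^{st}_X, ψ) ≥ min{ d(H_X, α_⊥ J_X, ψ), d_R }`. -/
theorem spacetime_X_ewDist_lower_bound
    {n k q rX rZ rG rM nG : ℕ}
    (HX : Matrix (Fin rX) (Fin n) (ZMod 2)) (HZ : Matrix (Fin rZ) (Fin n) (ZMod 2))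
    (JX JZ : Matrix (Fin k) (Fin n) (ZMod 2))
    (hHXHZ : HX * HZᵀ = 0) (hHXJZ : HX * JZᵀ = 0) (hHZJX : HZ * JXᵀ = 0)
    (hJXJZ : JX * JZᵀ = 1)
    (hq1 : 1 ≤ q) (hqk : q ≤ k)
    (α : Matrix (Fin q) (Fin k) (ZMod 2))
    (αperp : Matrix (Fin (k - q)) (Fin k) (ZMod 2)) (hperp : αperp * αᵀ = 0)
    (αperpR : Matrix (Fin k) (Fin (k - q)) (ZMod 2)) (hrinv : αperp * αperpR = 1)
    (S : Matrix (Fin nG) (Fin n) (ZMod 2)) (T : Matrix (Fin rX) (Fin rG) (ZMod 2))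
    (HG : Matrix (Fin rG) (Fin nG) (ZMod 2)) (HM : Matrix (Fin rM) (Fin rG) (ZMod 2))
    (R : Matrix (Fin n) (Fin nG) (ZMod 2)) (β : Matrix (Fin (k - q)) (Fin rG) (ZMod 2))
    (hs1 : HX * Sᵀ = T * HG) (hs2 : HM * HG = 0)
    (hs3a : α * JZ * R * S = α * JZ) (hs3b : HG * (α * JZ * R)ᵀ = 0)
    (hs4 : αperp * JX * Sᵀ = β * HG)
    (dR : ℕ) (hdRpos : 0 < dR) (hbound : BoundedPair HG HM S dR)
    (dT : ℕ) (hdT : 2 ≤ dT) :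
    ∀ ψ : Fin (k - q) → ZMod 2,
      min (ewDist HX (αperp * JX) ψ) (dR : ℕ∞) ≤
        ewDist (HstX dT (HbarX HX T HM)) (JstX dT (JbarX JX αperp β)) ψ := by
  intro ψ
  refine le_sInf ?_
  rintro w ⟨e, hH, hJ, rfl⟩
  -- components of the spacetime error
  set B := HbarX HX T HM with hB
  set e0 : Fin n ⊕ Fin rG → ZMod 2 := fun qq => e (Sum.inl qq) with he0
  set et : Fin (dT - 1) → Fin n ⊕ Fin rG → ZMod 2 :=
    fun t qq => e (Sum.inr (Sum.inl (t, qq))) with het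
  set ef : Fin n ⊕ Fin rG → ZMod 2 := fun qq => e (Sum.inr (Sum.inr (Sum.inl qq))) with hef
  set m : Fin dT → (Fin rX ⊕ Fin rM) → ZMod 2 :=
    fun s c => e (Sum.inr (Sum.inr (Sum.inr (s, c)))) with hm
  set M : ℕ → (Fin rX ⊕ Fin rM) → ZMod 2 :=
    fun i c => if h : i < dT then m ⟨i, h⟩ c else 0 with hM
  have hdT0 : 0 < dT := by omega
  -- row equations
  have r1 : ∀ c, B.mulVec e0 c = M 0 c := by
    intro c
    have h := congrFun hH (Sum.inl c)
    simp only [Matrix.mulVec, dotProduct, HstX, Matrix.of_apply, Fintype.sum_sum_type,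
      Fintype.sum_prod_type, Pi.zero_apply, ite_mul, one_mul, zero_mul, mul_zero,
      Finset.sum_const_zero, add_zero, zero_add, sum_ite_and_right, sum_fin_ite_val] at h
    simp only [Matrix.mulVec, dotProduct, Fintype.sum_sum_type, hM]
    obtain c | c := c
    · simp only [Sum.inl.injEq, reduceCtorEq, and_false, false_and, if_false,
        Finset.sum_const_zero, add_zero, zero_add, sum_ite_and_right, sum_fin_ite_val] at h
      exact z2_add_eq_zero h
    · simp only [Sum.inr.injEq, reduceCtorEq, and_false, false_and, if_false,
        Finset.sum_const_zero, add_zero, zero_add, sum_ite_and_right, sum_fin_ite_val] at h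
      exact z2_add_eq_zero h
  -- middle-row equations
  have r2 : ∀ (t : Fin (dT - 1)) c, B.mulVec (et t) c = M ↑t c + M (↑t + 1) c := by
    intro t c
    have h := congrFun hH (Sum.inr (Sum.inl (t, c)))
    have hne : (t : ℕ) ≠ (t : ℕ) + 1 := by omega
    simp only [Matrix.mulVec, dotProduct, HstX, Matrix.of_apply, Fintype.sum_sum_type,
      Fintype.sum_prod_type, Pi.zero_apply, ite_mul, one_mul, zero_mul, mul_zero,
      Finset.sum_const_zero, add_zero, zero_add] at h
    simp only [Matrix.mulVec, dotProduct, Fintype.sum_sum_type, hM]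
    obtain c | c := c
    · simp only [Sum.inl.injEq, reduceCtorEq, and_false, false_and, if_false,
        Finset.sum_const_zero, add_zero, zero_add, sum_ite_and_right, sum_ite_const,
        Finset.sum_ite_eq', Finset.mem_univ, if_true, Finset.sum_add_distrib,
        sum_fin_ite_or _ _ hne] at h
      exact z2_add_eq_zero h
    · simp only [Sum.inr.injEq, reduceCtorEq, and_false, false_and, if_false,
        Finset.sum_const_zero, add_zero, zero_add, sum_ite_and_right, sum_ite_const,
        Finset.sum_ite_eq', Finset.mem_univ, if_true, Finset.sum_add_distrib,
        sum_fin_ite_or _ _ hne] at h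
      exact z2_add_eq_zero h
  -- last-row equation
  have r3 : ∀ c, B.mulVec ef c = M (dT - 1) c := by
    intro c
    have h := congrFun hH (Sum.inr (Sum.inr c))
    simp only [Matrix.mulVec, dotProduct, HstX, Matrix.of_apply, Fintype.sum_sum_type,
      Fintype.sum_prod_type, Pi.zero_apply, ite_mul, one_mul, zero_mul, mul_zero,
      Finset.sum_const_zero, add_zero, zero_add] at h
    simp only [Matrix.mulVec, dotProduct, Fintype.sum_sum_type, hM]
    obtain c | c := c
    · simp only [Sum.inl.injEq, reduceCtorEq, and_false, false_and, if_false,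
        Finset.sum_const_zero, add_zero, zero_add, sum_ite_and_right, sum_fin_ite_val] at h
      exact z2_add_eq_zero h
    · simp only [Sum.inr.injEq, reduceCtorEq, and_false, false_and, if_false,
        Finset.sum_const_zero, add_zero, zero_add, sum_ite_and_right, sum_fin_ite_val] at h
      exact z2_add_eq_zero h
  -- the accumulated error
  set f : Fin n ⊕ Fin rG → ZMod 2 := e0 + (∑ t, et t) + ef with hf
  have hA : B.mulVec f = 0 := by
    funext c
    have : B.mulVec f c = B.mulVec e0 c + (∑ t : Fin (dT - 1), B.mulVec (et t) c) + B.mulVec ef c := by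
      rw [hf, Matrix.mulVec_add, Matrix.mulVec_add, mulVec_finsum]
      simp
    rw [this, r1, r3]
    have hsum : (∑ t : Fin (dT - 1), B.mulVec (et t) c) =
        ∑ i ∈ Finset.range (dT - 1), (M (i + 1) c - M i c) := by
      simp only [r2]
      rw [Fin.sum_univ_eq_sum_range (fun i => M i c + M (i + 1) c) (dT - 1)]
      apply Finset.sum_congr rfl
      intro i _
      rw [CharTwo.sub_eq_add, add_comm]
    rw [hsum, Finset.sum_range_sub (fun i => M i c)]
    have : ∀ a b : ZMod 2, a + (b - a) + b = 0 := by decide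
    exact this _ _
  -- the logical constraint for f
  have hJf : (JbarX JX αperp β).mulVec f = ψ := by
    funext i
    have h := congrFun hJ i
    simp only [Matrix.mulVec, dotProduct, JstX, Matrix.of_apply, Fintype.sum_sum_type,
      Fintype.sum_prod_type, mul_zero, zero_mul, Finset.sum_const_zero, add_zero] at h
    have : (JbarX JX αperp β).mulVec f i = (JbarX JX αperp β).mulVec e0 i +
        (∑ t : Fin (dT - 1), (JbarX JX αperp β).mulVec (et t) i) +
        (JbarX JX αperp β).mulVec ef i := by
      rw [hf, Matrix.mulVec_add, Matrix.mulVec_add, mulVec_finsum]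
      simp
    rw [this]
    simp only [Matrix.mulVec, dotProduct, Fintype.sum_sum_type, he0, het, hef]
    rw [← h]
    ring
  -- split f into data-qubit and gauge parts
  set fn : Fin n → ZMod 2 := fun a => f (Sum.inl a) with hfn
  set fg : Fin rG → ZMod 2 := fun g => f (Sum.inr g) with hfg
  have hsplit : f = Sum.elim fn fg := by funext x; cases x <;> rfl
  rw [hB, HbarX, hsplit, Matrix.fromBlocks_mulVec] at hA
  have h1 : HX.mulVec fn + T.mulVec fg = 0 := by
    funext a; simpa using congrFun hA (Sum.inl a)
  have h2 : HM.mulVec fg = 0 := by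
    funext a
    have := congrFun hA (Sum.inr a)
    simpa [Matrix.zero_mulVec] using this
  rw [JbarX, hsplit, Matrix.fromCols_mulVec_sumElim] at hJf
  -- weight bounds
  have hwf : hammingNorm f ≤ hammingNorm e := by
    have hdec : hammingNorm e = hammingNorm e0 + ((∑ t : Fin (dT - 1), hammingNorm (et t)) +
        (hammingNorm ef + hammingNorm (fun p : Fin dT × (Fin rX ⊕ Fin rM) =>
          e (Sum.inr (Sum.inr (Sum.inr p)))))) := by
      rw [hn_sumType e, hn_sumType (e ∘ Sum.inr), hn_sumType ((e ∘ Sum.inr) ∘ Sum.inr),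
        hn_prodType ((e ∘ Sum.inr) ∘ Sum.inl)]
      rfl
    calc hammingNorm f ≤ hammingNorm (e0 + ∑ t, et t) + hammingNorm ef := hn_add _ _
      _ ≤ (hammingNorm e0 + hammingNorm (∑ t, et t)) + hammingNorm ef := by
          gcongr; exact hn_add _ _
      _ ≤ (hammingNorm e0 + ∑ t : Fin (dT - 1), hammingNorm (et t)) + hammingNorm ef := by
          gcongr; exact hn_finsum _ _
      _ ≤ hammingNorm e := by rw [hdec]; omega
  have hfsplit : hammingNorm f = hammingNorm fn + hammingNorm fg := by
    rw [hn_sumType f]; rfl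
  -- case split on the weight of the gauge part
  by_cases hcase : hammingNorm fg < dR
  · obtain ⟨u, hu1, hu2⟩ := hbound fg h2 hcase
    set e' : Fin n → ZMod 2 := fn + Matrix.vecMul u S with he'
    have pf1 : HX.mulVec e' = 0 := by
      rw [he', Matrix.mulVec_add, Matrix.mulVec_vecMul, hs1, ← Matrix.mulVec_mulVec,
        ← hu1, h1]
    have pf2 : (αperp * JX).mulVec e' = ψ := by
      rw [he', Matrix.mulVec_add, Matrix.mulVec_vecMul]
      rw [show αperp * JX * Sᵀ = β * HG from hs4, ← Matrix.mulVec_mulVec u β HG, ← hu1, hJf]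
    have hmem : ((hammingNorm e' : ℕ∞)) ∈
        {w : ℕ∞ | ∃ e : Fin n → ZMod 2, HX.mulVec e = 0 ∧ (αperp * JX).mulVec e = ψ ∧
          w = (hammingNorm e : ℕ∞)} := ⟨e', pf1, pf2, rfl⟩
    have hle : ewDist HX (αperp * JX) ψ ≤ (hammingNorm e' : ℕ∞) := sInf_le hmem
    have hwe' : hammingNorm e' ≤ hammingNorm e := by
      calc hammingNorm e' ≤ hammingNorm fn + hammingNorm (Matrix.vecMul u S) := hn_add _ _
        _ ≤ hammingNorm fn + hammingNorm fg := by gcongr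
        _ = hammingNorm f := hfsplit.symm
        _ ≤ hammingNorm e := hwf
    exact le_trans (min_le_left _ _) (le_trans hle (by exact_mod_cast hwe'))
  · push_neg at hcase
    have : dR ≤ hammingNorm e := le_trans hcase (le_trans (by omega) hwf)
    exact le_trans (min_le_right _ _) (by exact_mod_cast this)
end

section
/- Assume the CSS code and the code-surgery datum. Then for every ψ ∈ F₂^{k−q}, the spacetime error-wise distance satisfies d(H^{st}_Z, J^{st}_Z, ψ) ≥ d(H_Z, (α_⊥ʳ)ᵀ J_Z, ψ). -/
open Matrix

lemma hn_sum_split {A B : Type*} [Fintype A] [Fintype B]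
    (x : A ⊕ B → ZMod 2) :
    hammingNorm x = hammingNorm (x ∘ Sum.inl) + hammingNorm (x ∘ Sum.inr) := by
  classical
  simp only [hammingNorm, Finset.card_filter]
  rw [Fintype.sum_sum_type]
  rfl

lemma hn_prod_split {A B : Type*} [Fintype A] [Fintype B]
    (x : A × B → ZMod 2) :
    hammingNorm x = ∑ a : A, hammingNorm (fun b => x (a, b)) := by
  classical
  simp only [hammingNorm, Finset.card_filter]
  rw [Fintype.sum_prod_type]

lemma hn_add_le {A : Type*} [Fintype A] (x y : A → ZMod 2) :
    hammingNorm (x + y) ≤ hammingNorm x + hammingNorm y := by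
  classical
  simp only [hammingNorm]
  refine le_trans (Finset.card_le_card ?_) (Finset.card_union_le _ _)
  intro i hi
  simp only [Finset.mem_filter, Finset.mem_univ, true_and, Finset.mem_union, Pi.add_apply] at *
  by_contra h
  push_neg at h
  exact hi (by rw [h.1, h.2, add_zero])

lemma hn_finsum_le {A ι : Type*} [Fintype A] (s : Finset ι) (f : ι → A → ZMod 2) :
    hammingNorm (∑ t ∈ s, f t) ≤ ∑ t ∈ s, hammingNorm (f t) := by
  classical
  induction s using Finset.induction with
  | empty => simp
  | insert _ _ hx ih =>
    rw [Finset.sum_insert hx, Finset.sum_insert hx]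
    exact le_trans (hn_add_le _ _) (by omega)

lemma telescope2 (m : ℕ) (g : ℕ → ZMod 2) :
    ∑ t : Fin m, (g t + g (t + 1)) = g 0 + g m := by
  induction m with
  | zero => simp [CharTwo.add_self_eq_zero]
  | succ m ih =>
    rw [Fin.sum_univ_castSucc]
    simp only [Fin.coe_castSucc, Fin.val_last, ih]
    ring_nf
    rw [show (g m * 2 : ZMod 2) = 0 by rw [mul_two]; exact CharTwo.add_self_eq_zero _]
    ring_nf

lemma sum_ite_fin {m c : ℕ} (hc : c < m) (g : Fin m → ZMod 2) :
    ∑ s : Fin m, (if (s : ℕ) = c then g s else 0) = g ⟨c, hc⟩ := by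
  rw [Finset.sum_eq_single (⟨c, hc⟩ : Fin m)]
  · simp
  · intro b _ hb; simp only [ite_eq_right_iff]; intro h; exact absurd (Fin.ext h) hb
  · simp

lemma sum_ite_fin_or {m c d : ℕ} (hc : c < m) (hd : d < m) (hne : c ≠ d) (g : Fin m → ZMod 2) :
    ∑ s : Fin m, (if (s : ℕ) = c ∨ (s : ℕ) = d then g s else 0)
      = g ⟨c, hc⟩ + g ⟨d, hd⟩ := by
  have key : ∀ s : Fin m, (if (s : ℕ) = c ∨ (s : ℕ) = d then g s else 0)
      = (if (s : ℕ) = c then g s else 0) + (if (s : ℕ) = d then g s else 0) := by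
    intro s
    by_cases h1 : (s : ℕ) = c <;> by_cases h2 : (s : ℕ) = d
    · exact absurd (h1.symm.trans h2) hne
    all_goals simp [h1, h2, hne, Ne.symm hne]
  simp_rw [key]
  rw [Finset.sum_add_distrib, sum_ite_fin hc, sum_ite_fin hd]
/-- spacetime error-wise distance bound for errors on unmeasured Z logical
operators: `d(H^{st}_Z, J^{st}_Z, ψ) ≥ d(H_Z, (α_⊥ʳ)ᵀ J_Z, ψ)`. -/
theorem spacetime_Z_ewDist_lower_bound
    {n k q rX rZ rG rM nG : ℕ}
    (HX : Matrix (Fin rX) (Fin n) (ZMod 2)) (HZ : Matrix (Fin rZ) (Fin n) (ZMod 2))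
    (JX JZ : Matrix (Fin k) (Fin n) (ZMod 2))
    (hHXHZ : HX * HZᵀ = 0) (hHXJZ : HX * JZᵀ = 0) (hHZJX : HZ * JXᵀ = 0)
    (hJXJZ : JX * JZᵀ = 1)
    (hq1 : 1 ≤ q) (hqk : q ≤ k)
    (α : Matrix (Fin q) (Fin k) (ZMod 2))
    (αperp : Matrix (Fin (k - q)) (Fin k) (ZMod 2)) (hperp : αperp * αᵀ = 0)
    (αperpR : Matrix (Fin k) (Fin (k - q)) (ZMod 2)) (hrinv : αperp * αperpR = 1)
    (S : Matrix (Fin nG) (Fin n) (ZMod 2)) (T : Matrix (Fin rX) (Fin rG) (ZMod 2))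
    (HG : Matrix (Fin rG) (Fin nG) (ZMod 2)) (HM : Matrix (Fin rM) (Fin rG) (ZMod 2))
    (R : Matrix (Fin n) (Fin nG) (ZMod 2)) (β : Matrix (Fin (k - q)) (Fin rG) (ZMod 2))
    (hs1 : HX * Sᵀ = T * HG) (hs2 : HM * HG = 0)
    (hs3a : α * JZ * R * S = α * JZ) (hs3b : HG * (α * JZ * R)ᵀ = 0)
    (hs4 : αperp * JX * Sᵀ = β * HG)
    (dT : ℕ) (hdT : 2 ≤ dT) :
    ∀ ψ : Fin (k - q) → ZMod 2,
      ewDist HZ (αperpRᵀ * JZ) ψ ≤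
        ewDist (HstZ dT HZ (HbarZ HZ S HG)) (JstZ dT (αperpRᵀ * JZ) (JbarZ JZ αperpR)) ψ := by
  intro ψ
  classical
  refine le_sInf ?_
  rintro w ⟨e, hH, hJ, rfl⟩
  have h0lt : 0 < dT := by omega
  set f : Fin dT → (Fin rZ ⊕ Fin nG) → ZMod 2 :=
    fun s w => e (Sum.inr (Sum.inr (Sum.inr (s, w)))) with hf
  have hrow1 : ∀ z, HZ.mulVec (fun a => e (Sum.inl a)) z + f ⟨0, h0lt⟩ (Sum.inl z) = 0 := by
    intro z
    have h := congrFun hH (Sum.inl z)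
    simp [HstZ, Matrix.mulVec, dotProduct, Fintype.sum_sum_type, Fintype.sum_prod_type,
      ite_and, Finset.sum_ite_eq'] at h
    rw [sum_ite_fin h0lt (fun s => e (Sum.inr (Sum.inr (Sum.inr (s, Sum.inl z)))))] at h
    simpa [Matrix.mulVec, dotProduct, hf] using h
  have hrow3 : ∀ z, HZ.mulVec (fun a => e (Sum.inr (Sum.inr (Sum.inl a)))) z
      + f ⟨dT - 1, by omega⟩ (Sum.inl z) = 0 := by
    intro z
    have h := congrFun hH (Sum.inr (Sum.inr z))
    simp [HstZ, Matrix.mulVec, dotProduct, Fintype.sum_sum_type, Fintype.sum_prod_type,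
      ite_and, Finset.sum_ite_eq'] at h
    rw [sum_ite_fin (show dT - 1 < dT by omega)
      (fun s => e (Sum.inr (Sum.inr (Sum.inr (s, Sum.inl z)))))] at h
    simpa [Matrix.mulVec, dotProduct, hf] using h
  have hrow2 : ∀ (t : Fin (dT - 1)) (z : Fin rZ),
      HZ.mulVec (fun a => e (Sum.inr (Sum.inl (t, Sum.inl a)))) z
      + (f ⟨(t : ℕ), by omega⟩ (Sum.inl z) + f ⟨(t : ℕ) + 1, by omega⟩ (Sum.inl z)) = 0 := by
    intro t z
    have h := congrFun hH (Sum.inr (Sum.inl (t, Sum.inl z)))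
    simp [HstZ, HbarZ, Matrix.mulVec, dotProduct, Fintype.sum_sum_type,
      Fintype.sum_prod_type, ite_and, Finset.sum_ite_eq'] at h
    rw [sum_ite_fin_or (show (t:ℕ) < dT by omega) (show (t:ℕ)+1 < dT by omega) (by omega)
      (fun s => e (Sum.inr (Sum.inr (Sum.inr (s, Sum.inl z)))))] at h
    simpa [Matrix.mulVec, dotProduct, hf] using h
  -- the J rows
  have hJrow : ∀ i, (αperpRᵀ * JZ).mulVec (fun a => e (Sum.inl a)) i
      + (∑ t : Fin (dT - 1), (αperpRᵀ * JZ).mulVec (fun a => e (Sum.inr (Sum.inl (t, Sum.inl a)))) i)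
      + (αperpRᵀ * JZ).mulVec (fun a => e (Sum.inr (Sum.inr (Sum.inl a)))) i = ψ i := by
    intro i
    have h := congrFun hJ i
    simp only [JstZ, JbarZ, Matrix.mulVec, dotProduct, Fintype.sum_sum_type,
      Fintype.sum_prod_type, Matrix.of_apply, Matrix.fromCols_apply_inl,
      Matrix.fromCols_apply_inr, Matrix.zero_apply, zero_mul, mul_zero,
      Finset.sum_const_zero, add_zero, Pi.zero_apply] at h
    simpa [Matrix.mulVec, dotProduct, add_assoc] using h
  -- the combined error
  set e1 : Fin n → ZMod 2 := fun a => e (Sum.inl a) with he1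
  set em : Fin (dT - 1) → Fin n → ZMod 2 :=
    fun t a => e (Sum.inr (Sum.inl (t, Sum.inl a))) with hem
  set e3 : Fin n → ZMod 2 := fun a => e (Sum.inr (Sum.inr (Sum.inl a))) with he3
  set e' : Fin n → ZMod 2 := e1 + (∑ t : Fin (dT - 1), em t) + e3 with he'
  have hlin : ∀ (M : Matrix (Fin rZ) (Fin n) (ZMod 2)), True := fun _ => trivial
  have hmulsum : ∀ {r : ℕ} (M : Matrix (Fin r) (Fin n) (ZMod 2)),
      M.mulVec e' = M.mulVec e1 + (∑ t : Fin (dT - 1), M.mulVec (em t)) + M.mulVec e3 := by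
    intro r M
    have := map_sum M.mulVecLin em Finset.univ
    simp only [Matrix.mulVecLin_apply] at this
    simp [he', Matrix.mulVec_add, this]
  have hHe' : HZ.mulVec e' = 0 := by
    funext z
    set g : ℕ → ZMod 2 := fun s => if h : s < dT then f ⟨s, h⟩ (Sum.inl z) else 0 with hg
    have tel := telescope2 (dT - 1) g
    have hg0 : g 0 = f ⟨0, h0lt⟩ (Sum.inl z) := by simp [hg, h0lt]
    have hgl : g (dT - 1) = f ⟨dT - 1, by omega⟩ (Sum.inl z) := by
      simp [hg, show dT - 1 < dT by omega]
    have h1 : HZ.mulVec e1 z = f ⟨0, h0lt⟩ (Sum.inl z) := by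
      have := hrow1 z
      have h2 : ∀ x y : ZMod 2, x + y = 0 → x = y := by decide
      exact h2 _ _ this
    have h3 : HZ.mulVec e3 z = f ⟨dT - 1, by omega⟩ (Sum.inl z) := by
      have := hrow3 z
      have h2 : ∀ x y : ZMod 2, x + y = 0 → x = y := by decide
      exact h2 _ _ this
    have h2 : ∀ t : Fin (dT - 1), HZ.mulVec (em t) z = g (t : ℕ) + g ((t : ℕ) + 1) := by
      intro t
      have := hrow2 t z
      have hcc : ∀ x y : ZMod 2, x + y = 0 → x = y := by decide
      have := hcc _ _ this
      rw [this]
      simp [hg, show (t : ℕ) < dT by omega, show (t : ℕ) + 1 < dT by omega]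
    have hsum : (∑ t : Fin (dT - 1), HZ.mulVec (em t)) z
        = f ⟨0, h0lt⟩ (Sum.inl z) + f ⟨dT - 1, by omega⟩ (Sum.inl z) := by
      rw [Finset.sum_apply]
      rw [Finset.sum_congr rfl (fun t _ => h2 t)]
      rw [tel, hg0, hgl]
    have hfin : ∀ x y : ZMod 2, x + (x + y) + y = 0 := by decide
    rw [hmulsum HZ]
    simp only [Pi.add_apply, h1, h3, hsum, Pi.zero_apply]
    exact hfin _ _
  have hJe' : (αperpRᵀ * JZ).mulVec e' = ψ := by
    funext i
    rw [hmulsum (αperpRᵀ * JZ)]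
    have := hJrow i
    simpa [Finset.sum_apply] using this
  -- weight bound
  have hw : hammingNorm e' ≤ hammingNorm e := by
    have step1 : hammingNorm e' ≤ hammingNorm e1
        + (∑ t : Fin (dT - 1), hammingNorm (em t)) + hammingNorm e3 := by
      refine le_trans (hn_add_le _ _) ?_
      have := hn_add_le e1 (∑ t : Fin (dT - 1), em t)
      have h2 := hn_finsum_le Finset.univ em
      omega
    have hsplit : hammingNorm e
        = hammingNorm e1 + hammingNorm (fun p : Fin (dT - 1) × (Fin n ⊕ Fin rG) =>
            e (Sum.inr (Sum.inl p)))
          + (hammingNorm e3 + hammingNorm (fun p : Fin dT × (Fin rZ ⊕ Fin nG) =>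
            e (Sum.inr (Sum.inr (Sum.inr p))))) := by
      rw [hn_sum_split e, hn_sum_split (e ∘ Sum.inr), hn_sum_split ((e ∘ Sum.inr) ∘ Sum.inr)]
      simp only [Function.comp_def, he1, he3]
      ring
    have hmid : (∑ t : Fin (dT - 1), hammingNorm (em t))
        ≤ hammingNorm (fun p : Fin (dT - 1) × (Fin n ⊕ Fin rG) => e (Sum.inr (Sum.inl p))) := by
      rw [hn_prod_split]
      refine Finset.sum_le_sum ?_
      intro t _
      rw [hn_sum_split (fun qq : Fin n ⊕ Fin rG => e (Sum.inr (Sum.inl (t, qq))))]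
      exact Nat.le_add_right _ _
    omega
  refine le_trans (sInf_le ⟨e', hHe', hJe', rfl⟩) ?_
  exact_mod_cast hw
end

section
/- Assume the CSS code and the code-surgery datum. Then the deformed check matrices form a valid CSS code, i.e., H̄_X H̄_Zᵀ = 0. -/
open Matrix

/-- the deformed check matrices form a valid CSS code: `H̄_X H̄_Zᵀ = 0`. -/
theorem deformed_code_is_CSS
    {n k q rX rZ rG rM nG : ℕ}
    (HX : Matrix (Fin rX) (Fin n) (ZMod 2)) (HZ : Matrix (Fin rZ) (Fin n) (ZMod 2))
    (JX JZ : Matrix (Fin k) (Fin n) (ZMod 2))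
    (hHXHZ : HX * HZᵀ = 0) (hHXJZ : HX * JZᵀ = 0) (hHZJX : HZ * JXᵀ = 0)
    (hJXJZ : JX * JZᵀ = 1)
    (hq1 : 1 ≤ q) (hqk : q ≤ k)
    (α : Matrix (Fin q) (Fin k) (ZMod 2))
    (αperp : Matrix (Fin (k - q)) (Fin k) (ZMod 2)) (hperp : αperp * αᵀ = 0)
    (αperpR : Matrix (Fin k) (Fin (k - q)) (ZMod 2)) (hrinv : αperp * αperpR = 1)
    (S : Matrix (Fin nG) (Fin n) (ZMod 2)) (T : Matrix (Fin rX) (Fin rG) (ZMod 2))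
    (HG : Matrix (Fin rG) (Fin nG) (ZMod 2)) (HM : Matrix (Fin rM) (Fin rG) (ZMod 2))
    (R : Matrix (Fin n) (Fin nG) (ZMod 2)) (β : Matrix (Fin (k - q)) (Fin rG) (ZMod 2))
    (hs1 : HX * Sᵀ = T * HG) (hs2 : HM * HG = 0)
    (hs3a : α * JZ * R * S = α * JZ) (hs3b : HG * (α * JZ * R)ᵀ = 0)
    (hs4 : αperp * JX * Sᵀ = β * HG)
    : HbarX HX T HM * (HbarZ HZ S HG)ᵀ = 0 := by
  have h2 : (2 : ZMod 2) = 0 := rfl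
  rw [HbarX, HbarZ, Matrix.fromBlocks_transpose, Matrix.fromBlocks_multiply]
  rw [Matrix.transpose_zero, Matrix.transpose_transpose]
  simp [hHXHZ, hs1, hs2, ← two_smul (ZMod 2) (T * HG), h2]
end

section
/- Assume the CSS code and the code-surgery datum. Then J̄_X = (α_⊥ J_X β) and J̄_Z = ((α_⊥ʳ)ᵀ J_Z 0) are valid logical generator matrices for the deformed code, i.e., H̄_X J̄_Zᵀ = 0, H̄_Z J̄_Xᵀ = 0, and J̄_X J̄_Zᵀ = E_{k−q}. -/
open Matrix

/-- `J̄_X` and `J̄_Z` are valid logical generator matrices of the deformed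
code: `H̄_X J̄_Zᵀ = 0`, `H̄_Z J̄_Xᵀ = 0` and `J̄_X J̄_Zᵀ = E_{k−q}`. -/
theorem deformed_generators_valid
    {n k q rX rZ rG rM nG : ℕ}
    (HX : Matrix (Fin rX) (Fin n) (ZMod 2)) (HZ : Matrix (Fin rZ) (Fin n) (ZMod 2))
    (JX JZ : Matrix (Fin k) (Fin n) (ZMod 2))
    (hHXHZ : HX * HZᵀ = 0) (hHXJZ : HX * JZᵀ = 0) (hHZJX : HZ * JXᵀ = 0)
    (hJXJZ : JX * JZᵀ = 1)
    (hq1 : 1 ≤ q) (hqk : q ≤ k)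
    (α : Matrix (Fin q) (Fin k) (ZMod 2))
    (αperp : Matrix (Fin (k - q)) (Fin k) (ZMod 2)) (hperp : αperp * αᵀ = 0)
    (αperpR : Matrix (Fin k) (Fin (k - q)) (ZMod 2)) (hrinv : αperp * αperpR = 1)
    (S : Matrix (Fin nG) (Fin n) (ZMod 2)) (T : Matrix (Fin rX) (Fin rG) (ZMod 2))
    (HG : Matrix (Fin rG) (Fin nG) (ZMod 2)) (HM : Matrix (Fin rM) (Fin rG) (ZMod 2))
    (R : Matrix (Fin n) (Fin nG) (ZMod 2)) (β : Matrix (Fin (k - q)) (Fin rG) (ZMod 2))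
    (hs1 : HX * Sᵀ = T * HG) (hs2 : HM * HG = 0)
    (hs3a : α * JZ * R * S = α * JZ) (hs3b : HG * (α * JZ * R)ᵀ = 0)
    (hs4 : αperp * JX * Sᵀ = β * HG)
    : HbarX HX T HM * (JbarZ (rG := rG) JZ αperpR)ᵀ = 0 ∧
      HbarZ HZ S HG * (JbarX JX αperp β)ᵀ = 0 ∧
      JbarX JX αperp β * (JbarZ (rG := rG) JZ αperpR)ᵀ = 1 := by
  have char2 : ∀ {a b : ℕ} (M : Matrix (Fin a) (Fin b) (ZMod 2)), M + M = 0 := by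
    intro a b M; ext i j; simp [CharTwo.add_self_eq_zero]
  have frz : ∀ {a b c : ℕ}, Matrix.fromRows (0 : Matrix (Fin a) (Fin c) (ZMod 2))
      (0 : Matrix (Fin b) (Fin c) (ZMod 2)) = 0 := by
    intro a b c; ext (i|i) j <;> simp
  refine ⟨?_, ?_, ?_⟩
  · rw [HbarX, JbarZ, transpose_fromCols, fromBlocks_mul_fromRows, transpose_mul,
      transpose_transpose, ← Matrix.mul_assoc, hHXJZ]
    simp [frz]
  · rw [HbarZ, JbarX, transpose_fromCols, fromBlocks_mul_fromRows, transpose_mul,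
      ← Matrix.mul_assoc HZ, hHZJX, Matrix.zero_mul, Matrix.zero_mul, add_zero]
    have h2 : S * (JXᵀ * αperpᵀ) + HGᵀ * βᵀ = 0 := by
      have := congrArg Matrix.transpose hs4
      rw [transpose_mul, transpose_mul, transpose_mul, transpose_transpose] at this
      rw [this]; exact char2 _
    rw [h2, frz]
  · rw [JbarX, JbarZ, transpose_fromCols, fromCols_mul_fromRows, transpose_mul,
      transpose_transpose, Matrix.mul_assoc αperp, ← Matrix.mul_assoc JX, hJXJZ,
      Matrix.one_mul]
    simp [hrinv]
end

section
/- Assume the CSS code and the code-surgery datum. Then for every ψ ∈ F₂^{k−q}, the deformed-code error-wise distance satisfies d(H̄_Z, J̄_Z, ψ) ≥ d(H_Z, (α_⊥ʳ)ᵀ J_Z, ψ). -/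
open Matrix

/-- deformed-code error-wise distance bound for X logical errors:
`d(H̄_Z, J̄_Z, ψ) ≥ d(H_Z, (α_⊥ʳ)ᵀ J_Z, ψ)`. -/
theorem deformed_Z_ewDist_lower_bound
    {n k q rX rZ rG rM nG : ℕ}
    (HX : Matrix (Fin rX) (Fin n) (ZMod 2)) (HZ : Matrix (Fin rZ) (Fin n) (ZMod 2))
    (JX JZ : Matrix (Fin k) (Fin n) (ZMod 2))
    (hHXHZ : HX * HZᵀ = 0) (hHXJZ : HX * JZᵀ = 0) (hHZJX : HZ * JXᵀ = 0)
    (hJXJZ : JX * JZᵀ = 1)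
    (hq1 : 1 ≤ q) (hqk : q ≤ k)
    (α : Matrix (Fin q) (Fin k) (ZMod 2))
    (αperp : Matrix (Fin (k - q)) (Fin k) (ZMod 2)) (hperp : αperp * αᵀ = 0)
    (αperpR : Matrix (Fin k) (Fin (k - q)) (ZMod 2)) (hrinv : αperp * αperpR = 1)
    (S : Matrix (Fin nG) (Fin n) (ZMod 2)) (T : Matrix (Fin rX) (Fin rG) (ZMod 2))
    (HG : Matrix (Fin rG) (Fin nG) (ZMod 2)) (HM : Matrix (Fin rM) (Fin rG) (ZMod 2))
    (R : Matrix (Fin n) (Fin nG) (ZMod 2)) (β : Matrix (Fin (k - q)) (Fin rG) (ZMod 2))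
    (hs1 : HX * Sᵀ = T * HG) (hs2 : HM * HG = 0)
    (hs3a : α * JZ * R * S = α * JZ) (hs3b : HG * (α * JZ * R)ᵀ = 0)
    (hs4 : αperp * JX * Sᵀ = β * HG)
    : ∀ ψ : Fin (k - q) → ZMod 2,
      ewDist HZ (αperpRᵀ * JZ) ψ ≤ ewDist (HbarZ HZ S HG) (JbarZ JZ αperpR) ψ := by
  intro ψ
  apply le_sInf
  rintro w ⟨e, hH, hJ, rfl⟩
  set e1 : Fin n → ZMod 2 := e ∘ Sum.inl with he1
  set e2 : Fin rG → ZMod 2 := e ∘ Sum.inr with he2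
  have hE : e = Sum.elim e1 e2 := by
    funext j; cases j <;> rfl
  rw [hE] at hH hJ
  rw [HbarZ, Matrix.fromBlocks_mulVec] at hH
  have hH1 : HZ.mulVec e1 = 0 := by
    have := congrArg (· ∘ Sum.inl) hH
    simpa using this
  have hJ1 : (αperpRᵀ * JZ).mulVec e1 = ψ := by
    rw [JbarZ, Matrix.fromCols_mulVec_sumElim] at hJ
    simpa using hJ
  have hle : hammingNorm e1 ≤ hammingNorm (Sum.elim e1 e2) := by
    unfold hammingNorm
    apply Finset.card_le_card_of_injOn Sum.inl
    · intro a ha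
      simpa using (Finset.mem_filter.mp ha).2
    · intro a _ b _ h; exact Sum.inl.inj h
  rw [hE]
  refine le_trans (sInf_le ⟨e1, hH1, hJ1, rfl⟩) ?_
  exact_mod_cast hle
end

section
/- (Measurement sticker is (d_R, S̃)-bounded, stated in matrix form.) Let H_G ∈ F₂^{r_G×n_G} and S ∈ F₂^{n_G×n} be such that |w S| ≤ |w| for every row vector w ∈ F₂^{1×n_G}, and let d_R ≥ 2 be an integer. Let H_{d_R} ∈ F₂^{(d_R−1)×d_R} be the repetition-code check matrix with (H_{d_R})_{i,j} = 1 iff j ∈ {i, i+1}. Then for all matrices A ∈ F₂^{n_G×(d_R−1)} and B ∈ F₂^{r_G×d_R} with H_G A = B H_{d_R}ᵀ and |A| + |B| < d_R, there exists U ∈ F₂^{n_G×d_R} such that A = U H_{d_R}ᵀ, B = H_G U, and |cᵀ S| ≤ |A| + |B|, where c ∈ F₂^{n_G} is the first column of U. -/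
open Matrix

section Aux
open Finset

lemma twoTermSum {m : ℕ} (f : Fin m → ZMod 2) (a b : ℕ) (ha : a < m) (hb : b < m)
    (hab : a ≠ b) :
    (∑ s : Fin m, f s * (if (s : ℕ) = a ∨ (s : ℕ) = b then 1 else 0))
      = f ⟨a, ha⟩ + f ⟨b, hb⟩ := by
  have key : ∀ s : Fin m, f s * (if (s : ℕ) = a ∨ (s : ℕ) = b then 1 else 0)
      = (if s = ⟨a, ha⟩ then f s else 0) + (if s = ⟨b, hb⟩ then f s else 0) := by
    intro s
    by_cases h1 : (s : ℕ) = a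
    · have h2 : (s : ℕ) ≠ b := by omega
      rw [if_pos (Or.inl h1), if_pos (Fin.ext h1), if_neg (fun h => h2 (congrArg Fin.val h)),
        mul_one, add_zero]
    · by_cases h2 : (s : ℕ) = b
      · rw [if_pos (Or.inr h2), if_neg (fun h => h1 (congrArg Fin.val h)),
          if_pos (Fin.ext h2), mul_one, zero_add]
      · rw [if_neg (not_or.mpr ⟨h1, h2⟩), if_neg (fun h => h1 (congrArg Fin.val h)),
          if_neg (fun h => h2 (congrArg Fin.val h)), mul_zero, add_zero]
  simp_rw [key]
  rw [Finset.sum_add_distrib, Finset.sum_ite_eq', Finset.sum_ite_eq']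
  simp

end Aux

/-- the measurement sticker is `(d_R, S̃)`-bounded, in matrix form. -/
theorem measurement_sticker_bounded {n rG nG : ℕ}
    (HG : Matrix (Fin rG) (Fin nG) (ZMod 2)) (S : Matrix (Fin nG) (Fin n) (ZMod 2))
    (hS : ∀ w : Fin nG → ZMod 2, hammingNorm (Matrix.vecMul w S) ≤ hammingNorm w)
    (dR : ℕ) (hdR : 2 ≤ dR)
    (A : Matrix (Fin nG) (Fin (dR - 1)) (ZMod 2)) (B : Matrix (Fin rG) (Fin dR) (ZMod 2))
    (hAB : HG * A = B * (repH dR)ᵀ) (hw : matWeight A + matWeight B < dR) :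
    ∃ U : Matrix (Fin nG) (Fin dR) (ZMod 2),
      A = U * (repH dR)ᵀ ∧ B = HG * U ∧
      hammingNorm (Matrix.vecMul (fun g => U g (⟨0, by omega⟩ : Fin dR)) S) ≤
        matWeight A + matWeight B := by
    classical
  -- Step 1: find a zero column of B
  have hcol : ∃ j : Fin dR, ∀ r, B r j = 0 := by
    by_contra hcontra
    push_neg at hcontra
    choose g hg using hcontra
    have hinj : dR ≤ matWeight B := by
      have hle := Finset.card_le_card_of_injOn
        (s := (Finset.univ : Finset (Fin dR)))
        (t := Finset.univ.filter fun p : Fin rG × Fin dR => Function.uncurry B p ≠ 0)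
        (fun j : Fin dR => ((g j, j) : Fin rG × Fin dR))
        (fun j _ => by
          simp only [Finset.mem_coe, Set.mem_setOf_eq, Function.uncurry, Finset.mem_filter, Finset.mem_univ, true_and]
          exact Finset.mem_filter.mpr ⟨Finset.mem_univ _, hg j⟩)
        (fun x _ y _ h => by simpa using congrArg Prod.snd h)
      simpa [matWeight, hammingNorm] using hle
    omega
  obtain ⟨j, hj⟩ := hcol
  -- Step 2: define U
  set A' : Fin nG → ℕ → ZMod 2 :=
    fun g t => if h : t < dR - 1 then A g ⟨t, h⟩ else 0 with hA'
  set c : Fin nG → ZMod 2 := fun g => ∑ t ∈ Finset.range (j : ℕ), A' g t with hc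
  set U : Matrix (Fin nG) (Fin dR) (ZMod 2) :=
    Matrix.of fun g i => (∑ t ∈ Finset.range (i : ℕ), A' g t) + c g with hU
  have hrepHT : ∀ (s : Fin dR) (i : Fin (dR - 1)),
      (repH dR)ᵀ s i = if (s : ℕ) = (i : ℕ) ∨ (s : ℕ) = (i : ℕ) + 1 then 1 else 0 :=
    fun s i => rfl
  -- helper: telescoping identity from hAB
  have hBH : ∀ (r : Fin rG) (t : ℕ) (ht : t < dR - 1),
      (∑ g, HG r g * A' g t) = B r ⟨t, by omega⟩ + B r ⟨t + 1, by omega⟩ := by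
    intro r t ht
    have h1 : (HG * A) r ⟨t, ht⟩ = (B * (repH dR)ᵀ) r ⟨t, ht⟩ := by rw [hAB]
    rw [Matrix.mul_apply, Matrix.mul_apply] at h1
    have h2 : (∑ g, HG r g * A' g t) = ∑ g, HG r g * A g ⟨t, ht⟩ := by
      apply Finset.sum_congr rfl
      intro g _
      simp [hA', ht]
    rw [h2, h1]
    have h3 : (∑ s, B r s * (repH dR)ᵀ s ⟨t, ht⟩)
        = B r ⟨t, by omega⟩ + B r ⟨t + 1, by omega⟩ := by
      simp_rw [hrepHT]
      exact twoTermSum (B r) t (t + 1) (by omega) (by omega) (by omega)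
    exact h3
  have tel : ∀ (r : Fin rG) (mN : ℕ) (hmN : mN < dR),
      (∑ t ∈ Finset.range mN, ∑ g, HG r g * A' g t)
        = B r ⟨0, by omega⟩ + B r ⟨mN, hmN⟩ := by
    intro r mN
    induction mN with
    | zero =>
      intro _
      have : ∀ x : ZMod 2, 0 = x + x := by decide
      simpa using this _
    | succ mN ih =>
      intro h
      rw [Finset.sum_range_succ, ih (by omega), hBH r mN (by omega)]
      have id4 : ∀ a b d : ZMod 2, (a + b) + (b + d) = a + d := by decide
      exact id4 _ _ _
  refine ⟨U, ?_, ?_, ?_⟩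
  · -- A = U * (repH dR)ᵀ
    ext g i
    rw [Matrix.mul_apply]
    simp_rw [hrepHT]
    have hi1 : (i : ℕ) < dR := by omega
    have hi2 : (i : ℕ) + 1 < dR := by omega
    rw [twoTermSum (U g) (i : ℕ) ((i : ℕ) + 1) hi1 hi2 (by omega)]
    have hU1 : U g ⟨(i : ℕ), hi1⟩ = (∑ t ∈ Finset.range (i : ℕ), A' g t) + c g := rfl
    have hU2 : U g ⟨(i : ℕ) + 1, hi2⟩
        = ((∑ t ∈ Finset.range (i : ℕ), A' g t) + A' g (i : ℕ)) + c g := by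
      show (∑ t ∈ Finset.range ((i : ℕ) + 1), A' g t) + c g = _
      rw [Finset.sum_range_succ]
    rw [hU1, hU2]
    have hAi : A' g (i : ℕ) = A g i := by simp [hA', i.2]
    rw [hAi]
    have idq : ∀ x cc a : ZMod 2, a = (x + cc) + ((x + a) + cc) := by decide
    exact idq _ _ _
  · -- B = HG * U
    ext r i
    rw [Matrix.mul_apply]
    have expand : (∑ g, HG r g * U g i)
        = (∑ t ∈ Finset.range (i : ℕ), ∑ g, HG r g * A' g t)
          + (∑ t ∈ Finset.range (j : ℕ), ∑ g, HG r g * A' g t) := by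
      simp only [hU, Matrix.of_apply, hc, mul_add, Finset.mul_sum, Finset.sum_add_distrib]
      congr 1 <;> exact Finset.sum_comm
    rw [expand, tel r (i : ℕ) i.2, tel r (j : ℕ) j.2]
    have hBj : B r ⟨(j : ℕ), j.2⟩ = 0 := by
      have : (⟨(j : ℕ), j.2⟩ : Fin dR) = j := rfl
      rw [this]; exact hj r
    have hBi : B r ⟨(i : ℕ), i.2⟩ = B r i := rfl
    rw [hBj, hBi]
    have idq : ∀ a b : ZMod 2, b = (a + b) + (a + 0) := by decide
    exact idq _ _
  · -- weight bound
    have hU0 : (fun g => U g (⟨0, by omega⟩ : Fin dR)) = c := by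
      funext g
      show (∑ t ∈ Finset.range 0, A' g t) + c g = c g
      simp
    rw [hU0]
    have hcA : hammingNorm c ≤ matWeight A := by
      have hchoice : ∀ g : Fin nG, ∃ t : Fin (dR - 1), c g ≠ 0 → A g t ≠ 0 := by
        intro g
        by_cases hg : c g = 0
        · exact ⟨⟨0, by omega⟩, fun h => absurd hg h⟩
        · obtain ⟨t, _, ht⟩ := Finset.exists_ne_zero_of_sum_ne_zero hg
          have htlt : t < dR - 1 := by
            by_contra hlt
            exact ht (by simp [hA', hlt])
          refine ⟨⟨t, htlt⟩, fun _ => ?_⟩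
          simpa [hA', htlt] using ht
      choose f hf using hchoice
      have hle := Finset.card_le_card_of_injOn
        (s := Finset.univ.filter fun g : Fin nG => c g ≠ 0)
        (t := Finset.univ.filter fun p : Fin nG × Fin (dR - 1) => Function.uncurry A p ≠ 0)
        (fun g : Fin nG => ((g, f g) : Fin nG × Fin (dR - 1)))
        (fun g hgmem => by
          simp only [Finset.mem_coe, Set.mem_setOf_eq, Finset.mem_filter, Finset.mem_univ, true_and,
            Function.uncurry] at hgmem ⊢
          exact Finset.mem_filter.mpr ⟨Finset.mem_univ _, hf g hgmem⟩)
        (fun x _ y _ h => by simpa using congrArg Prod.fst h)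
      simpa [matWeight, hammingNorm] using hle
    calc hammingNorm (Matrix.vecMul c S) ≤ hammingNorm c := hS c
      _ ≤ matWeight A := hcA
      _ ≤ matWeight A + matWeight B := Nat.le_add_right _ _
end
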